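/- arXiv:2511.19903 — 3 statements merged into one kernel-verified Lean document; each statement's English description precedes it below -/
import Mathlib

section
/- For all smooth functions f, g : ℝⁿ×ℝⁿ → ℝ one has X({f,g}~) = {Xf, g}~ + {f, Xg}~ at every point of ℝⁿ×ℝⁿ, where {f,g}~ = −(k/2)·H·{f,g} + {f,g}⁻; that is, the bivector P̃ = −(k/2)H·P + P̄′ is invariant with respect to the phase flow generated by the Hamiltonian vector field X. -/
open scoped BigOperators

noncomputable section

/-- Phase space `T*ℝⁿ = ℝⁿ × ℝⁿ`, points `x = (q, p)`. -/
abbrev Phase (n : ℕ) := (Fin n → ℝ) × (Fin n → ℝ)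

/-- Partial derivative `∂f/∂qᵢ` of a function on phase space. -/
def dq {n : ℕ} (f : Phase n → ℝ) (i : Fin n) (x : Phase n) : ℝ :=
  fderiv ℝ f x (Pi.single i 1, 0)

/-- Partial derivative `∂f/∂pᵢ` of a function on phase space. -/
def dp {n : ℕ} (f : Phase n → ℝ) (i : Fin n) (x : Phase n) : ℝ :=
  fderiv ℝ f x (0, Pi.single i 1)

/-- Partial derivative `∂V/∂qᵢ` of a potential on configuration space. -/
def dV {n : ℕ} (V : (Fin n → ℝ) → ℝ) (i : Fin n) (q : Fin n → ℝ) : ℝ :=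
  fderiv ℝ V q (Pi.single i 1)

/-- The Hamiltonian `H(q,p) = Σᵢ pᵢ²/(2mᵢ) + V(q)`. -/
def Ham {n : ℕ} (m : Fin n → ℝ) (V : (Fin n → ℝ) → ℝ) (x : Phase n) : ℝ :=
  (∑ i, x.2 i ^ 2 / (2 * m i)) + V x.1

/-- The Hamiltonian vector field `X` acting on functions:
`Xf = Σᵢ (pᵢ/mᵢ) ∂f/∂qᵢ − (∂V/∂qᵢ) ∂f/∂pᵢ`. -/
def Xop {n : ℕ} (m : Fin n → ℝ) (V : (Fin n → ℝ) → ℝ) (f : Phase n → ℝ) (x : Phase n) : ℝ :=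
  ∑ i, (x.2 i / m i * dq f i x - dV V i x.1 * dp f i x)

/-- The canonical Poisson bracket `{f,g} = Σᵢ (∂f/∂qᵢ ∂g/∂pᵢ − ∂f/∂pᵢ ∂g/∂qᵢ)`. -/
def bracketC {n : ℕ} (f g : Phase n → ℝ) (x : Phase n) : ℝ :=
  ∑ i, (dq f i x * dp g i x - dp f i x * dq g i x)

/-- `Āᵢⱼ = aⱼpᵢ/mᵢ − aᵢpⱼ/mⱼ`. -/
def Abar {n : ℕ} (m a : Fin n → ℝ) (i j : Fin n) (x : Phase n) : ℝ :=
  a j * x.2 i / m i - a i * x.2 j / m j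

/-- `B̄ᵢⱼ = (k/(2mᵢ)) pᵢpⱼ + aᵢ ∂U/∂qⱼ`. -/
def Bbar {n : ℕ} (m a : Fin n → ℝ) (k : ℝ) (U : (Fin n → ℝ) → ℝ) (i j : Fin n)
    (x : Phase n) : ℝ :=
  k / (2 * m i) * (x.2 i * x.2 j) + a i * dV U j x.1

/-- `C̄ᵢⱼ = (k/2)(pᵢ ∂U/∂qⱼ − pⱼ ∂U/∂qᵢ)`. -/
def Cbar {n : ℕ} (k : ℝ) (U : (Fin n → ℝ) → ℝ) (i j : Fin n) (x : Phase n) : ℝ :=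
  k / 2 * (x.2 i * dV U j x.1 - x.2 j * dV U i x.1)

/-- The bracket `{f,g}⁻` associated with the bivector `P̄′`. -/
def bracketB {n : ℕ} (m a : Fin n → ℝ) (k : ℝ) (U : (Fin n → ℝ) → ℝ)
    (f g : Phase n → ℝ) (x : Phase n) : ℝ :=
  ∑ i, ∑ j,
    (Abar m a i j x * (dq f i x * dq g j x)
      + Bbar m a k U i j x * (dq f i x * dp g j x - dp f j x * dq g i x)
      + Cbar k U i j x * (dp f i x * dp g j x))

/-- The bracket `{f,g}~ = −(k/2)·H·{f,g} + {f,g}⁻` of the bivector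
`P̃ = −(k/2)H·P + P̄′`. -/
def bracketTilde {n : ℕ} (m a : Fin n → ℝ) (k : ℝ) (U : (Fin n → ℝ) → ℝ)
    (f g : Phase n → ℝ) (x : Phase n) : ℝ :=
  -(k / 2) * Ham m U x * bracketC f g x + bracketB m a k U f g x

section AuxiliaryLemmas

-- second derivative symmetry
lemma second_symm {E : Type*} [NormedAddCommGroup E] [NormedSpace ℝ E]
    (f : E → ℝ) (hf : ContDiff ℝ (⊤ : ℕ∞) f) (x u v : E) :
    fderiv ℝ (fun y => fderiv ℝ f y v) x u = fderiv ℝ (fun y => fderiv ℝ f y u) x v := by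
  have hd : DifferentiableAt ℝ (fderiv ℝ f) x :=
    ((hf.fderiv_right (m := 1) (WithTop.coe_le_coe.mpr le_top)).differentiable one_ne_zero) x
  have h1 : ∀ w z : E, fderiv ℝ (fun y => fderiv ℝ f y w) x z
      = fderiv ℝ (fderiv ℝ f) x z w := by
    intro w z
    rw [fderiv_clm_apply hd (differentiableAt_const w)]
    simp
  rw [h1, h1]
  exact (hf.contDiffAt.isSymmSndFDerivAt (by rw [minSmoothness_of_isRCLikeNormedField]; exact WithTop.coe_le_coe.mpr le_top)) u v

lemma fderiv_snd_apply {n : ℕ} (i : Fin n) (x v : Phase n) :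
    fderiv ℝ (fun y : Phase n => y.2 i) x v = v.2 i := by
  have h : (fun y : Phase n => y.2 i)
      = ((ContinuousLinearMap.proj (R := ℝ) (φ := fun _ : Fin n => ℝ) i).comp
        (ContinuousLinearMap.snd ℝ (Fin n → ℝ) (Fin n → ℝ))) := rfl
  rw [h, ContinuousLinearMap.fderiv]
  rfl

lemma contDiff_snd_apply {n : ℕ} (i : Fin n) :
    ContDiff ℝ (⊤ : ℕ∞) (fun y : Phase n => y.2 i) :=
  ((ContinuousLinearMap.proj (R := ℝ) (φ := fun _ : Fin n => ℝ) i).comp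
        (ContinuousLinearMap.snd ℝ (Fin n → ℝ) (Fin n → ℝ))).contDiff

lemma fderiv_comp_fst {n : ℕ} (W : (Fin n → ℝ) → ℝ) (x : Phase n)
    (hW : DifferentiableAt ℝ W x.1) (v : Phase n) :
    fderiv ℝ (fun y : Phase n => W y.1) x v = fderiv ℝ W x.1 v.1 := by
  have h := (hW.hasFDerivAt.comp x (hasFDerivAt_fst (p := x))).fderiv
  rw [show (fun y : Phase n => W y.1) = W ∘ Prod.fst from rfl, h]
  rfl

variable {n : ℕ}

lemma fderiv_sum_apply' {N : ℕ} (A : Fin N → Phase n → ℝ) (x : Phase n)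
    (h : ∀ i, DifferentiableAt ℝ (A i) x) (v : Phase n) :
    fderiv ℝ (fun y => ∑ i, A i y) x v = ∑ i, fderiv ℝ (A i) x v := by
  rw [fderiv_fun_sum (fun i _ => h i)]
  simp

lemma fderiv_mul_apply' (F G : Phase n → ℝ) (x : Phase n)
    (hF : DifferentiableAt ℝ F x) (hG : DifferentiableAt ℝ G x) (v : Phase n) :
    fderiv ℝ (fun y => F y * G y) x v
      = fderiv ℝ F x v * G x + F x * fderiv ℝ G x v := by
  rw [fderiv_fun_mul hF hG]
  simp [mul_comm]
  ring

lemma fderiv_const_mul_apply' (c : ℝ) (G : Phase n → ℝ) (x : Phase n)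
    (hG : DifferentiableAt ℝ G x) (v : Phase n) :
    fderiv ℝ (fun y => c * G y) x v = c * fderiv ℝ G x v := by
  rw [fderiv_const_mul hG]
  simp

lemma fderiv_add_apply' (F G : Phase n → ℝ) (x : Phase n)
    (hF : DifferentiableAt ℝ F x) (hG : DifferentiableAt ℝ G x) (v : Phase n) :
    fderiv ℝ (fun y => F y + G y) x v = fderiv ℝ F x v + fderiv ℝ G x v := by
  rw [fderiv_fun_add hF hG]; rfl

lemma fderiv_sub_apply' (F G : Phase n → ℝ) (x : Phase n)
    (hF : DifferentiableAt ℝ F x) (hG : DifferentiableAt ℝ G x) (v : Phase n) :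
    fderiv ℝ (fun y => F y - G y) x v = fderiv ℝ F x v - fderiv ℝ G x v := by
  rw [fderiv_fun_sub hF hG]; rfl

lemma contDiff_dq (f : Phase n → ℝ) (hf : ContDiff ℝ (⊤ : ℕ∞) f) (i : Fin n) :
    ContDiff ℝ (⊤ : ℕ∞) (fun y => dq f i y) :=
  (hf.fderiv_right (by simp)).clm_apply contDiff_const

lemma contDiff_dp (f : Phase n → ℝ) (hf : ContDiff ℝ (⊤ : ℕ∞) f) (i : Fin n) :
    ContDiff ℝ (⊤ : ℕ∞) (fun y => dp f i y) :=
  (hf.fderiv_right (by simp)).clm_apply contDiff_const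

lemma contDiff_dV (U : (Fin n → ℝ) → ℝ) (hU : ContDiff ℝ (⊤ : ℕ∞) U) (i : Fin n) :
    ContDiff ℝ (⊤ : ℕ∞) (dV U i) :=
  (hU.fderiv_right (by simp)).clm_apply contDiff_const

lemma contDiff_dV_phase (U : (Fin n → ℝ) → ℝ) (hU : ContDiff ℝ (⊤ : ℕ∞) U) (i : Fin n) :
    ContDiff ℝ (⊤ : ℕ∞) (fun y : Phase n => dV U i y.1) :=
  (contDiff_dV U hU i).comp contDiff_fst

/-- The conformal vector field `Y = Σᵢ aᵢ ∂/∂qᵢ + (k/2) pᵢ ∂/∂pᵢ` acting on functions. -/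
def Yop (a : Fin n → ℝ) (k : ℝ) (f : Phase n → ℝ) (x : Phase n) : ℝ :=
  ∑ i, (a i * dq f i x + k / 2 * x.2 i * dp f i x)

lemma contDiff_Xop (m : Fin n → ℝ) (U : (Fin n → ℝ) → ℝ) (hU : ContDiff ℝ (⊤ : ℕ∞) U)
    (f : Phase n → ℝ) (hf : ContDiff ℝ (⊤ : ℕ∞) f) :
    ContDiff ℝ (⊤ : ℕ∞) (fun y => Xop m U f y) := by
  unfold Xop
  exact ContDiff.sum fun i _ =>
    (((contDiff_snd_apply i).div_const (m i)).mul (contDiff_dq f hf i)).sub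
      ((contDiff_dV_phase U hU i).mul (contDiff_dp f hf i))

lemma contDiff_Yop (a : Fin n → ℝ) (k : ℝ) (f : Phase n → ℝ) (hf : ContDiff ℝ (⊤ : ℕ∞) f) :
    ContDiff ℝ (⊤ : ℕ∞) (fun y => Yop a k f y) := by
  unfold Yop
  exact ContDiff.sum fun i _ =>
    (contDiff_const.mul (contDiff_dq f hf i)).add
      ((contDiff_const.mul (contDiff_snd_apply i)).mul (contDiff_dp f hf i))

lemma contDiff_Ham (m : Fin n → ℝ) (U : (Fin n → ℝ) → ℝ) (hU : ContDiff ℝ (⊤ : ℕ∞) U) :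
    ContDiff ℝ (⊤ : ℕ∞) (Ham m U) := by
  unfold Ham
  exact (ContDiff.sum fun i _ => ((contDiff_snd_apply i).pow 2).div_const (2 * m i)).add
    (hU.comp contDiff_fst)

lemma contDiff_bracketC (f g : Phase n → ℝ) (hf : ContDiff ℝ (⊤ : ℕ∞) f) (hg : ContDiff ℝ (⊤ : ℕ∞) g) :
    ContDiff ℝ (⊤ : ℕ∞) (fun y => bracketC f g y) := by
  unfold bracketC
  exact ContDiff.sum fun i _ =>
    ((contDiff_dq f hf i).mul (contDiff_dp g hg i)).sub
      ((contDiff_dp f hf i).mul (contDiff_dq g hg i))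

lemma Xop_mul (m : Fin n → ℝ) (U : (Fin n → ℝ) → ℝ) (F G : Phase n → ℝ) (x : Phase n)
    (hF : DifferentiableAt ℝ F x) (hG : DifferentiableAt ℝ G x) :
    Xop m U (fun y => F y * G y) x = Xop m U F x * G x + F x * Xop m U G x := by
  unfold Xop dq dp
  simp only [fderiv_mul_apply' F G x hF hG]
  rw [Finset.sum_mul, Finset.mul_sum, ← Finset.sum_add_distrib]
  exact Finset.sum_congr rfl fun i _ => by ring

lemma Xop_sub (m : Fin n → ℝ) (U : (Fin n → ℝ) → ℝ) (F G : Phase n → ℝ) (x : Phase n)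
    (hF : DifferentiableAt ℝ F x) (hG : DifferentiableAt ℝ G x) :
    Xop m U (fun y => F y - G y) x = Xop m U F x - Xop m U G x := by
  unfold Xop dq dp
  simp only [fderiv_sub_apply' F G x hF hG]
  rw [← Finset.sum_sub_distrib]
  exact Finset.sum_congr rfl fun i _ => by ring

lemma Xop_add (m : Fin n → ℝ) (U : (Fin n → ℝ) → ℝ) (F G : Phase n → ℝ) (x : Phase n)
    (hF : DifferentiableAt ℝ F x) (hG : DifferentiableAt ℝ G x) :
    Xop m U (fun y => F y + G y) x = Xop m U F x + Xop m U G x := by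
  unfold Xop dq dp
  simp only [fderiv_add_apply' F G x hF hG]
  rw [← Finset.sum_add_distrib]
  exact Finset.sum_congr rfl fun i _ => by ring

lemma Xop_const_mul (m : Fin n → ℝ) (U : (Fin n → ℝ) → ℝ) (c : ℝ) (G : Phase n → ℝ)
    (x : Phase n) (hG : DifferentiableAt ℝ G x) :
    Xop m U (fun y => c * G y) x = c * Xop m U G x := by
  unfold Xop dq dp
  simp only [fderiv_const_mul_apply' c G x hG]
  rw [Finset.mul_sum]
  exact Finset.sum_congr rfl fun i _ => by ring

lemma Xop_sum (m : Fin n → ℝ) (U : (Fin n → ℝ) → ℝ) {N : ℕ} (A : Fin N → Phase n → ℝ)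
    (x : Phase n) (h : ∀ i, DifferentiableAt ℝ (A i) x) :
    Xop m U (fun y => ∑ i, A i y) x = ∑ i, Xop m U (A i) x := by
  unfold Xop dq dp
  simp only [fderiv_sum_apply' A x h]
  rw [Finset.sum_comm]
  refine Finset.sum_congr rfl fun i _ => ?_
  rw [Finset.mul_sum, Finset.mul_sum, ← Finset.sum_sub_distrib]

lemma diffAt {E F : Type*} [NormedAddCommGroup E] [NormedSpace ℝ E]
    [NormedAddCommGroup F] [NormedSpace ℝ F] {f : E → F}
    (h : ContDiff ℝ (⊤ : ℕ∞) f) (x : E) : DifferentiableAt ℝ f x :=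
  h.differentiable (by simp) x

lemma fderiv_snd_div_apply (m : Fin n → ℝ) (l : Fin n) (x v : Phase n) :
    fderiv ℝ (fun y : Phase n => y.2 l / m l) x v = v.2 l / m l := by
  simp only [div_eq_mul_inv]
  rw [fderiv_mul_const (diffAt (contDiff_snd_apply l) x), ContinuousLinearMap.smul_apply]
  rw [fderiv_snd_apply]
  simp [mul_comm]

lemma fderiv_dV_phase_apply (U : (Fin n → ℝ) → ℝ) (hU : ContDiff ℝ (⊤ : ℕ∞) U) (l : Fin n)
    (x v : Phase n) :
    fderiv ℝ (fun y : Phase n => dV U l y.1) x v = fderiv ℝ (dV U l) x.1 v.1 :=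
  fderiv_comp_fst (dV U l) x (diffAt (contDiff_dV U hU l) x.1) v

lemma fderiv_Xop_apply (m : Fin n → ℝ) (U : (Fin n → ℝ) → ℝ) (hU : ContDiff ℝ (⊤ : ℕ∞) U)
    (f : Phase n → ℝ) (hf : ContDiff ℝ (⊤ : ℕ∞) f) (x v : Phase n) :
    fderiv ℝ (fun y => Xop m U f y) x v
      = ∑ l, (v.2 l / m l * dq f l x
          + x.2 l / m l * fderiv ℝ (fun y => dq f l y) x v
          - (fderiv ℝ (dV U l) x.1 v.1 * dp f l x
            + dV U l x.1 * fderiv ℝ (fun y => dp f l y) x v)) := by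
  unfold Xop
  rw [fderiv_sum_apply' _ x (fun l =>
    (((diffAt ((contDiff_snd_apply l).div_const (m l)) x).fun_mul
        (diffAt (contDiff_dq f hf l) x)).fun_sub
      ((diffAt (contDiff_dV_phase U hU l) x).fun_mul (diffAt (contDiff_dp f hf l) x))))]
  refine Finset.sum_congr rfl fun l _ => ?_
  rw [fderiv_sub_apply' _ _ x
      ((diffAt ((contDiff_snd_apply l).div_const (m l)) x).fun_mul
        (diffAt (contDiff_dq f hf l) x))
      ((diffAt (contDiff_dV_phase U hU l) x).fun_mul (diffAt (contDiff_dp f hf l) x)),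
    fderiv_mul_apply' _ _ x (diffAt ((contDiff_snd_apply l).div_const (m l)) x)
      (diffAt (contDiff_dq f hf l) x),
    fderiv_mul_apply' _ _ x (diffAt (contDiff_dV_phase U hU l) x)
      (diffAt (contDiff_dp f hf l) x),
    fderiv_snd_div_apply, fderiv_dV_phase_apply U hU]

lemma fderiv_Yop_apply (a : Fin n → ℝ) (k : ℝ)
    (f : Phase n → ℝ) (hf : ContDiff ℝ (⊤ : ℕ∞) f) (x v : Phase n) :
    fderiv ℝ (fun y => Yop a k f y) x v
      = ∑ l, (a l * fderiv ℝ (fun y => dq f l y) x v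
          + (k / 2 * v.2 l * dp f l x
            + k / 2 * x.2 l * fderiv ℝ (fun y => dp f l y) x v)) := by
  unfold Yop
  rw [fderiv_sum_apply' _ x (fun l =>
    ((diffAt (contDiff_const.mul (contDiff_dq f hf l)) x).fun_add
      ((diffAt (contDiff_const.mul (contDiff_snd_apply l)) x).fun_mul
        (diffAt (contDiff_dp f hf l) x))))]
  refine Finset.sum_congr rfl fun l _ => ?_
  rw [fderiv_add_apply' _ _ x (diffAt (contDiff_const.mul (contDiff_dq f hf l)) x)
      ((diffAt (contDiff_const.mul (contDiff_snd_apply l)) x).fun_mul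
        (diffAt (contDiff_dp f hf l) x)),
    fderiv_const_mul_apply' _ _ x (diffAt (contDiff_dq f hf l) x),
    fderiv_mul_apply' _ _ x (diffAt (contDiff_const.mul (contDiff_snd_apply l)) x)
      (diffAt (contDiff_dp f hf l) x),
    fderiv_const_mul_apply' _ _ x (diffAt (contDiff_snd_apply l) x),
    fderiv_snd_apply]

lemma dq_dq_symm (f : Phase n → ℝ) (hf : ContDiff ℝ (⊤ : ℕ∞) f) (i l : Fin n) (x : Phase n) :
    dq (fun y => dq f l y) i x = dq (fun y => dq f i y) l x :=
  second_symm f hf x _ _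

lemma dq_dp_symm (f : Phase n → ℝ) (hf : ContDiff ℝ (⊤ : ℕ∞) f) (i l : Fin n) (x : Phase n) :
    dq (fun y => dp f l y) i x = dp (fun y => dq f i y) l x :=
  second_symm f hf x _ _

lemma dp_dq_symm (f : Phase n → ℝ) (hf : ContDiff ℝ (⊤ : ℕ∞) f) (i l : Fin n) (x : Phase n) :
    dp (fun y => dq f l y) i x = dq (fun y => dp f i y) l x :=
  second_symm f hf x _ _

lemma dp_dp_symm (f : Phase n → ℝ) (hf : ContDiff ℝ (⊤ : ℕ∞) f) (i l : Fin n) (x : Phase n) :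
    dp (fun y => dp f l y) i x = dp (fun y => dp f i y) l x :=
  second_symm f hf x _ _

lemma dV_dV_symm (U : (Fin n → ℝ) → ℝ) (hU : ContDiff ℝ (⊤ : ℕ∞) U) (i l : Fin n)
    (q : Fin n → ℝ) : dV (dV U l) i q = dV (dV U i) l q :=
  second_symm U hU q _ _

lemma single_mul_sum (c : Fin n → ℝ) (i : Fin n) :
    ∑ l, (Pi.single i 1 : Fin n → ℝ) l * c l = c i := by
  simp [Pi.single_apply]

lemma dq_Xop (m : Fin n → ℝ) (U : (Fin n → ℝ) → ℝ) (hU : ContDiff ℝ (⊤ : ℕ∞) U)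
    (f : Phase n → ℝ) (hf : ContDiff ℝ (⊤ : ℕ∞) f) (i : Fin n) (x : Phase n) :
    dq (fun y => Xop m U f y) i x
      = Xop m U (fun y => dq f i y) x - ∑ l, dV (dV U l) i x.1 * dp f l x := by
  have e1 : ∀ l, fderiv ℝ (fun y => dq f l y) x (Pi.single i 1, 0)
      = dq (fun y => dq f i y) l x := fun l => dq_dq_symm f hf i l x
  have e2 : ∀ l, fderiv ℝ (fun y => dp f l y) x (Pi.single i 1, 0)
      = dp (fun y => dq f i y) l x := fun l => dq_dp_symm f hf i l x
  show fderiv ℝ (fun y => Xop m U f y) x (Pi.single i 1, 0) = _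
  rw [fderiv_Xop_apply m U hU f hf x (Pi.single i 1, 0)]
  simp only [e1, e2]
  unfold Xop
  rw [← Finset.sum_sub_distrib]
  refine Finset.sum_congr rfl fun l _ => ?_
  show (0 : Fin n → ℝ) l / m l * dq f l x + _ - _ = _
  rw [show fderiv ℝ (dV U l) x.1 (Pi.single i 1, (0 : Fin n → ℝ)).1
        = dV (dV U l) i x.1 from rfl]
  simp only [Pi.zero_apply, zero_div, zero_mul, zero_add]
  ring

lemma dp_Xop (m : Fin n → ℝ) (U : (Fin n → ℝ) → ℝ) (hU : ContDiff ℝ (⊤ : ℕ∞) U)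
    (f : Phase n → ℝ) (hf : ContDiff ℝ (⊤ : ℕ∞) f) (i : Fin n) (x : Phase n) :
    dp (fun y => Xop m U f y) i x
      = Xop m U (fun y => dp f i y) x + dq f i x / m i := by
  have e1 : ∀ l, fderiv ℝ (fun y => dq f l y) x ((0 : Fin n → ℝ), Pi.single i 1)
      = dq (fun y => dp f i y) l x := fun l => dp_dq_symm f hf i l x
  have e2 : ∀ l, fderiv ℝ (fun y => dp f l y) x ((0 : Fin n → ℝ), Pi.single i 1)
      = dp (fun y => dp f i y) l x := fun l => dp_dp_symm f hf i l x
  show fderiv ℝ (fun y => Xop m U f y) x (0, Pi.single i 1) = _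
  rw [fderiv_Xop_apply m U hU f hf x (0, Pi.single i 1)]
  simp only [e1, e2]
  have e3 : ∀ l, fderiv ℝ (dV U l) x.1 ((0 : Fin n → ℝ), (Pi.single i 1 : Fin n → ℝ)).1 = 0 := by
    intro l; simp
  simp only [e3, zero_mul, zero_add]
  unfold Xop
  have e5 : ∑ l, ((0, Pi.single i 1) : Phase n).2 l / m l * dq f l x
      = dq f i x / m i := by
    show ∑ l, (Pi.single i 1 : Fin n → ℝ) l / m l * dq f l x = _
    calc ∑ l, (Pi.single i 1 : Fin n → ℝ) l / m l * dq f l x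
        = ∑ l, (Pi.single i 1 : Fin n → ℝ) l * (dq f l x / m l) := by
          refine Finset.sum_congr rfl fun l _ => by ring
      _ = dq f i x / m i := single_mul_sum _ i
  calc ∑ l, (((0, Pi.single i 1) : Phase n).2 l / m l * dq f l x
          + x.2 l / m l * dq (fun y => dp f i y) l x
          - dV U l x.1 * dp (fun y => dp f i y) l x)
      = (∑ l, (x.2 l / m l * dq (fun y => dp f i y) l x
          - dV U l x.1 * dp (fun y => dp f i y) l x))
        + ∑ l, ((0, Pi.single i 1) : Phase n).2 l / m l * dq f l x := by
        rw [← Finset.sum_add_distrib]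
        exact Finset.sum_congr rfl fun l _ => by ring
    _ = _ := by rw [e5]

lemma dq_Yop (a : Fin n → ℝ) (k : ℝ) (f : Phase n → ℝ) (hf : ContDiff ℝ (⊤ : ℕ∞) f)
    (i : Fin n) (x : Phase n) :
    dq (fun y => Yop a k f y) i x = Yop a k (fun y => dq f i y) x := by
  have e1 : ∀ l, fderiv ℝ (fun y => dq f l y) x (Pi.single i 1, 0)
      = dq (fun y => dq f i y) l x := fun l => dq_dq_symm f hf i l x
  have e2 : ∀ l, fderiv ℝ (fun y => dp f l y) x (Pi.single i 1, 0)
      = dp (fun y => dq f i y) l x := fun l => dq_dp_symm f hf i l x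
  show fderiv ℝ (fun y => Yop a k f y) x (Pi.single i 1, 0) = _
  rw [fderiv_Yop_apply a k f hf x (Pi.single i 1, 0)]
  simp only [e1, e2]
  unfold Yop
  refine Finset.sum_congr rfl fun l _ => ?_
  show a l * _ + (k / 2 * ((0 : Fin n → ℝ) l) * _ + _) = _
  simp only [Pi.zero_apply, mul_zero, zero_mul, zero_add]

lemma dp_Yop (a : Fin n → ℝ) (k : ℝ) (f : Phase n → ℝ) (hf : ContDiff ℝ (⊤ : ℕ∞) f)
    (i : Fin n) (x : Phase n) :
    dp (fun y => Yop a k f y) i x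
      = Yop a k (fun y => dp f i y) x + k / 2 * dp f i x := by
  have e1 : ∀ l, fderiv ℝ (fun y => dq f l y) x ((0 : Fin n → ℝ), Pi.single i 1)
      = dq (fun y => dp f i y) l x := fun l => dp_dq_symm f hf i l x
  have e2 : ∀ l, fderiv ℝ (fun y => dp f l y) x ((0 : Fin n → ℝ), Pi.single i 1)
      = dp (fun y => dp f i y) l x := fun l => dp_dp_symm f hf i l x
  show fderiv ℝ (fun y => Yop a k f y) x (0, Pi.single i 1) = _
  rw [fderiv_Yop_apply a k f hf x (0, Pi.single i 1)]
  simp only [e1, e2]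
  unfold Yop
  rw [Finset.sum_add_distrib, Finset.sum_add_distrib, Finset.sum_add_distrib]
  have e4 : ∑ l, k / 2 * (((0 : Fin n → ℝ), (Pi.single i 1 : Fin n → ℝ)).2 l) * dp f l x
      = k / 2 * dp f i x := by
    show ∑ l, k / 2 * (Pi.single i 1 : Fin n → ℝ) l * dp f l x = _
    calc ∑ l, k / 2 * (Pi.single i 1 : Fin n → ℝ) l * dp f l x
        = ∑ l, (Pi.single i 1 : Fin n → ℝ) l * (k / 2 * dp f l x) := by
          refine Finset.sum_congr rfl fun l _ => by ring
      _ = k / 2 * dp f i x := single_mul_sum _ i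
  rw [e4]
  ring

lemma fderiv_Ham_apply (m : Fin n → ℝ) (U : (Fin n → ℝ) → ℝ) (hU : ContDiff ℝ (⊤ : ℕ∞) U)
    (x v : Phase n) :
    fderiv ℝ (Ham m U) x v = (∑ j, x.2 j * v.2 j / m j) + fderiv ℝ U x.1 v.1 := by
  unfold Ham
  rw [fderiv_add_apply' (fun y : Phase n => ∑ j, y.2 j ^ 2 / (2 * m j))
      (fun y : Phase n => U y.1) x
      (diffAt (ContDiff.sum fun j _ => ((contDiff_snd_apply j).pow 2).div_const (2 * m j)) x)
      ((diffAt hU x.1).comp x differentiableAt_fst),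
    fderiv_sum_apply' _ x (fun j => diffAt (((contDiff_snd_apply j).pow 2).div_const (2 * m j)) x),
    fderiv_comp_fst U x (diffAt hU x.1)]
  congr 1
  refine Finset.sum_congr rfl fun j _ => ?_
  have hrw : (fun y : Phase n => y.2 j ^ 2 / (2 * m j))
      = fun y => y.2 j * y.2 j * (2 * m j)⁻¹ := by
    funext y; rw [sq]; rw [div_eq_mul_inv]
  rw [hrw, fderiv_mul_const ((diffAt (contDiff_snd_apply j) x).fun_mul
      (diffAt (contDiff_snd_apply j) x)), ContinuousLinearMap.smul_apply,
    fderiv_mul_apply' _ _ x (diffAt (contDiff_snd_apply j) x)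
      (diffAt (contDiff_snd_apply j) x), fderiv_snd_apply]
  have : (v.2 j * x.2 j + x.2 j * v.2 j) * (2 * m j)⁻¹
      = (2 * (x.2 j * v.2 j)) / (2 * m j) := by
    rw [div_eq_mul_inv]; ring
  rw [smul_eq_mul, mul_comm, this, mul_div_mul_left _ _ (two_ne_zero)]

lemma dq_Ham (m : Fin n → ℝ) (U : (Fin n → ℝ) → ℝ) (hU : ContDiff ℝ (⊤ : ℕ∞) U)
    (i : Fin n) (x : Phase n) : dq (Ham m U) i x = dV U i x.1 := by
  show fderiv ℝ (Ham m U) x (Pi.single i 1, 0) = _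
  rw [fderiv_Ham_apply m U hU]
  simp [dV]

lemma dp_Ham (m : Fin n → ℝ) (U : (Fin n → ℝ) → ℝ) (hU : ContDiff ℝ (⊤ : ℕ∞) U)
    (i : Fin n) (x : Phase n) : dp (Ham m U) i x = x.2 i / m i := by
  show fderiv ℝ (Ham m U) x (0, Pi.single i 1) = _
  rw [fderiv_Ham_apply m U hU]
  have : ∑ j, x.2 j * (((0, Pi.single i 1) : Phase n).2 j) / m j = x.2 i / m i := by
    show ∑ j, x.2 j * ((Pi.single i 1 : Fin n → ℝ) j) / m j = _
    calc ∑ j, x.2 j * ((Pi.single i 1 : Fin n → ℝ) j) / m j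
        = ∑ j, (Pi.single i 1 : Fin n → ℝ) j * (x.2 j / m j) := by
          refine Finset.sum_congr rfl fun j _ => by ring
      _ = x.2 i / m i := single_mul_sum _ i
  rw [this]
  simp

lemma Xop_Ham (m : Fin n → ℝ) (U : (Fin n → ℝ) → ℝ) (hU : ContDiff ℝ (⊤ : ℕ∞) U)
    (x : Phase n) : Xop m U (Ham m U) x = 0 := by
  unfold Xop
  refine Finset.sum_eq_zero fun i _ => ?_
  rw [dq_Ham m U hU, dp_Ham m U hU]
  ring

lemma euler_deriv (a : Fin n → ℝ) (k : ℝ) (U : (Fin n → ℝ) → ℝ) (hU : ContDiff ℝ (⊤ : ℕ∞) U)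
    (hEuler : ∀ q : Fin n → ℝ, ∑ i, a i * dV U i q = k * U q)
    (q : Fin n → ℝ) (l : Fin n) :
    ∑ i, a i * dV (dV U i) l q = k * dV U l q := by
  have hfun : (fun q : Fin n → ℝ => ∑ i, a i * dV U i q) = fun q => k * U q :=
    funext hEuler
  have h1 : fderiv ℝ (fun q : Fin n → ℝ => ∑ i, a i * dV U i q) q (Pi.single l 1)
      = fderiv ℝ (fun q : Fin n → ℝ => k * U q) q (Pi.single l 1) := by rw [hfun]
  have h2 : fderiv ℝ (fun q : Fin n → ℝ => ∑ i, a i * dV U i q) q (Pi.single l 1)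
      = ∑ i, a i * dV (dV U i) l q := by
    rw [fderiv_fun_sum (fun i _ => (diffAt (contDiff_dV U hU i) q).const_mul (a i))]
    rw [ContinuousLinearMap.sum_apply]
    refine Finset.sum_congr rfl fun i _ => ?_
    rw [fderiv_const_mul (diffAt (contDiff_dV U hU i) q)]
    rfl
  have h3 : fderiv ℝ (fun q : Fin n → ℝ => k * U q) q (Pi.single l 1)
      = k * dV U l q := by
    rw [fderiv_const_mul (diffAt hU q)]
    rfl
  rw [← h2, h1, h3]

lemma sum_sum_antisymm (F : Fin n → Fin n → ℝ) (h : ∀ i l, F i l = - F l i) :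
    ∑ i, ∑ l, F i l = 0 := by
  have h2 : ∑ i, ∑ l, F i l = - ∑ i, ∑ l, F i l := by
    conv_lhs => rw [Finset.sum_comm]
    rw [← Finset.sum_neg_distrib]
    refine Finset.sum_congr rfl fun l _ => ?_
    rw [← Finset.sum_neg_distrib]
    exact Finset.sum_congr rfl fun i _ => h i l
  linarith

lemma Xop_bracketC (m : Fin n → ℝ) (U : (Fin n → ℝ) → ℝ) (hU : ContDiff ℝ (⊤ : ℕ∞) U)
    (f g : Phase n → ℝ) (hf : ContDiff ℝ (⊤ : ℕ∞) f) (hg : ContDiff ℝ (⊤ : ℕ∞) g) (x : Phase n) :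
    Xop m U (fun y => bracketC f g y) x
      = bracketC (fun y => Xop m U f y) g x + bracketC f (fun y => Xop m U g y) x := by
  have dfq : ∀ (h : Phase n → ℝ) (hh : ContDiff ℝ (⊤ : ℕ∞) h) (i : Fin n),
      DifferentiableAt ℝ (fun y => dq h i y) x := fun h hh i => diffAt (contDiff_dq h hh i) x
  have dfp : ∀ (h : Phase n → ℝ) (hh : ContDiff ℝ (⊤ : ℕ∞) h) (i : Fin n),
      DifferentiableAt ℝ (fun y => dp h i y) x := fun h hh i => diffAt (contDiff_dp h hh i) x
  have hL : Xop m U (fun y => bracketC f g y) x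
      = ∑ i, (Xop m U (fun y => dq f i y) x * dp g i x
          + dq f i x * Xop m U (fun y => dp g i y) x
          - (Xop m U (fun y => dp f i y) x * dq g i x
            + dp f i x * Xop m U (fun y => dq g i y) x)) := by
    unfold bracketC
    rw [Xop_sum m U _ x (fun i => ((dfq f hf i).fun_mul (dfp g hg i)).fun_sub
        ((dfp f hf i).fun_mul (dfq g hg i)))]
    refine Finset.sum_congr rfl fun i _ => ?_
    rw [Xop_sub m U _ _ x ((dfq f hf i).fun_mul (dfp g hg i)) ((dfp f hf i).fun_mul (dfq g hg i)),
      Xop_mul m U _ _ x (dfq f hf i) (dfp g hg i),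
      Xop_mul m U _ _ x (dfp f hf i) (dfq g hg i)]
  have hR1 : bracketC (fun y => Xop m U f y) g x
      = ∑ i, ((Xop m U (fun y => dq f i y) x - ∑ l, dV (dV U l) i x.1 * dp f l x)
            * dp g i x
          - (Xop m U (fun y => dp f i y) x + dq f i x / m i) * dq g i x) := by
    unfold bracketC
    refine Finset.sum_congr rfl fun i _ => ?_
    rw [dq_Xop m U hU f hf i x, dp_Xop m U hU f hf i x]
  have hR2 : bracketC f (fun y => Xop m U g y) x
      = ∑ i, (dq f i x * (Xop m U (fun y => dp g i y) x + dq g i x / m i)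
          - dp f i x * (Xop m U (fun y => dq g i y) x
            - ∑ l, dV (dV U l) i x.1 * dp g l x)) := by
    unfold bracketC
    refine Finset.sum_congr rfl fun i _ => ?_
    rw [dq_Xop m U hU g hg i x, dp_Xop m U hU g hg i x]
  rw [hL, hR1, hR2, ← Finset.sum_add_distrib, ← sub_eq_zero, ← Finset.sum_sub_distrib]
  have key : ∀ i : Fin n,
      (Xop m U (fun y => dq f i y) x * dp g i x
          + dq f i x * Xop m U (fun y => dp g i y) x
          - (Xop m U (fun y => dp f i y) x * dq g i x
            + dp f i x * Xop m U (fun y => dq g i y) x))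
        - (((Xop m U (fun y => dq f i y) x - ∑ l, dV (dV U l) i x.1 * dp f l x)
              * dp g i x
            - (Xop m U (fun y => dp f i y) x + dq f i x / m i) * dq g i x)
          + (dq f i x * (Xop m U (fun y => dp g i y) x + dq g i x / m i)
            - dp f i x * (Xop m U (fun y => dq g i y) x
              - ∑ l, dV (dV U l) i x.1 * dp g l x)))
      = ∑ l, (dV (dV U l) i x.1 * dp f l x * dp g i x
          - dV (dV U l) i x.1 * dp g l x * dp f i x) := by
    intro i
    rw [Finset.sum_sub_distrib, ← Finset.sum_mul, ← Finset.sum_mul]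
    ring
  rw [Finset.sum_congr rfl fun i _ => key i]
  refine sum_sum_antisymm _ fun i l => ?_
  rw [dV_dV_symm U hU l i x.1]
  ring

lemma regroup1 (c d e u : ℝ) (A B : Fin n → ℝ) :
    c * ((∑ j, A j) - u) + d * ((∑ j, B j) + e)
      = ∑ j, (c * A j + d * B j) - c * u + d * e := by
  have h1 : ∑ j, (c * A j + d * B j) = c * ∑ j, A j + d * ∑ j, B j := by
    rw [Finset.sum_add_distrib, ← Finset.mul_sum, ← Finset.mul_sum]
  rw [h1]; ring

lemma regroup2 (c d e : ℝ) (A B : Fin n → ℝ) :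
    c * (∑ j, A j) - d * ((∑ j, B j) + e)
      = ∑ j, (c * A j - d * B j) - d * e := by
  have h1 : ∑ j, (c * A j - d * B j) = c * ∑ j, A j - d * ∑ j, B j := by
    rw [Finset.sum_sub_distrib, ← Finset.mul_sum, ← Finset.mul_sum]
  rw [h1]; ring

lemma Xop_Yop_comm (m : Fin n → ℝ) (U : (Fin n → ℝ) → ℝ) (hU : ContDiff ℝ (⊤ : ℕ∞) U)
    (a : Fin n → ℝ) (k : ℝ)
    (hEuler : ∀ q : Fin n → ℝ, ∑ i, a i * dV U i q = k * U q)
    (f : Phase n → ℝ) (hf : ContDiff ℝ (⊤ : ℕ∞) f) (x : Phase n) :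
    Xop m U (fun y => Yop a k f y) x
      = Yop a k (fun y => Xop m U f y) x - k / 2 * Xop m U f x := by
  have hL : Xop m U (fun y => Yop a k f y) x
      = (∑ i, ∑ j, (x.2 i / m i * (a j * dq (fun y => dq f i y) j x
            + k / 2 * x.2 j * dp (fun y => dq f i y) j x)
          - dV U i x.1 * (a j * dq (fun y => dp f i y) j x
            + k / 2 * x.2 j * dp (fun y => dp f i y) j x)))
        - ∑ i, dV U i x.1 * (k / 2 * dp f i x) := by
    unfold Xop
    simp only [dq_Yop a k f hf, dp_Yop a k f hf]
    unfold Yop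
    rw [← Finset.sum_sub_distrib]
    refine Finset.sum_congr rfl fun i _ => ?_
    exact regroup2 _ _ _ _ _
  have hR : Yop a k (fun y => Xop m U f y) x
      = (∑ i, ∑ j, (a i * (x.2 j / m j * dq (fun y => dq f i y) j x
            - dV U j x.1 * dp (fun y => dq f i y) j x)
          + k / 2 * x.2 i * (x.2 j / m j * dq (fun y => dp f i y) j x
            - dV U j x.1 * dp (fun y => dp f i y) j x)))
        - ∑ i, a i * ∑ l, dV (dV U l) i x.1 * dp f l x
        + ∑ i, k / 2 * x.2 i * (dq f i x / m i) := by
    unfold Yop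
    simp only [dq_Xop m U hU f hf, dp_Xop m U hU f hf]
    unfold Xop
    rw [← Finset.sum_sub_distrib, ← Finset.sum_add_distrib]
    refine Finset.sum_congr rfl fun i _ => ?_
    exact regroup1 _ _ _ _ _ _
  have hswap : ∑ i, ∑ j, (a i * (x.2 j / m j * dq (fun y => dq f i y) j x
            - dV U j x.1 * dp (fun y => dq f i y) j x)
          + k / 2 * x.2 i * (x.2 j / m j * dq (fun y => dp f i y) j x
            - dV U j x.1 * dp (fun y => dp f i y) j x))
      = ∑ i, ∑ j, (x.2 i / m i * (a j * dq (fun y => dq f i y) j x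
            + k / 2 * x.2 j * dp (fun y => dq f i y) j x)
          - dV U i x.1 * (a j * dq (fun y => dp f i y) j x
            + k / 2 * x.2 j * dp (fun y => dp f i y) j x)) := by
    rw [Finset.sum_comm]
    refine Finset.sum_congr rfl fun i _ => Finset.sum_congr rfl fun j _ => ?_
    rw [dq_dq_symm f hf i j x, dp_dq_symm f hf i j x, dq_dp_symm f hf i j x,
      dp_dp_symm f hf i j x]
    ring
  have heuler : ∑ i, a i * ∑ l, dV (dV U l) i x.1 * dp f l x
      = k * ∑ l, dV U l x.1 * dp f l x := by
    calc ∑ i, a i * ∑ l, dV (dV U l) i x.1 * dp f l x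
        = ∑ i, ∑ l, a i * (dV (dV U l) i x.1 * dp f l x) :=
          Finset.sum_congr rfl fun i _ => Finset.mul_sum _ _ _
      _ = ∑ l, ∑ i, a i * (dV (dV U l) i x.1 * dp f l x) := Finset.sum_comm
      _ = ∑ l, (∑ i, a i * dV (dV U i) l x.1) * dp f l x := by
          refine Finset.sum_congr rfl fun l _ => ?_
          rw [Finset.sum_mul]
          refine Finset.sum_congr rfl fun i _ => ?_
          rw [dV_dV_symm U hU i l x.1]
          ring
      _ = ∑ l, k * dV U l x.1 * dp f l x := by
          refine Finset.sum_congr rfl fun l _ => ?_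
          rw [euler_deriv a k U hU hEuler x.1 l]
      _ = k * ∑ l, dV U l x.1 * dp f l x := by
          rw [Finset.mul_sum]
          exact Finset.sum_congr rfl fun l _ => by ring
  have hs1 : ∑ i, dV U i x.1 * (k / 2 * dp f i x)
      = k / 2 * ∑ i, dV U i x.1 * dp f i x := by
    rw [Finset.mul_sum]
    exact Finset.sum_congr rfl fun i _ => by ring
  have hs2 : ∑ i, k / 2 * x.2 i * (dq f i x / m i)
      = k / 2 * ∑ i, x.2 i / m i * dq f i x := by
    rw [Finset.mul_sum]
    exact Finset.sum_congr rfl fun i _ => by ring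
  have hX : Xop m U f x
      = (∑ i, x.2 i / m i * dq f i x) - ∑ i, dV U i x.1 * dp f i x := by
    unfold Xop
    rw [Finset.sum_sub_distrib]
  rw [hL, hR, hswap, heuler, hs1, hs2, hX]
  ring

lemma bracketB_eq (m a : Fin n → ℝ) (k : ℝ) (U : (Fin n → ℝ) → ℝ)
    (f g : Phase n → ℝ) (x : Phase n) :
    bracketB m a k U f g x
      = Xop m U f x * Yop a k g x - Yop a k f x * Xop m U g x := by
  have hsplit : bracketB m a k U f g x
      = (∑ i, ∑ j, (Abar m a i j x * (dq f i x * dq g j x)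
          + Bbar m a k U i j x * (dq f i x * dp g j x)
          + Cbar k U i j x * (dp f i x * dp g j x)))
        - ∑ i, ∑ j, Bbar m a k U i j x * (dp f j x * dq g i x) := by
    unfold bracketB
    rw [← Finset.sum_sub_distrib]
    refine Finset.sum_congr rfl fun i _ => ?_
    rw [← Finset.sum_sub_distrib]
    refine Finset.sum_congr rfl fun j _ => by ring
  have hswap : ∑ i, ∑ j, Bbar m a k U i j x * (dp f j x * dq g i x)
      = ∑ i, ∑ j, Bbar m a k U j i x * (dp f i x * dq g j x) := Finset.sum_comm
  have hrhs : Xop m U f x * Yop a k g x - Yop a k f x * Xop m U g x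
      = ∑ i, ∑ j, ((x.2 i / m i * dq f i x - dV U i x.1 * dp f i x)
            * (a j * dq g j x + k / 2 * x.2 j * dp g j x)
          - (a i * dq f i x + k / 2 * x.2 i * dp f i x)
            * (x.2 j / m j * dq g j x - dV U j x.1 * dp g j x)) := by
    unfold Xop Yop
    rw [Finset.sum_mul_sum, Finset.sum_mul_sum, ← Finset.sum_sub_distrib]
    refine Finset.sum_congr rfl fun i _ => ?_
    rw [← Finset.sum_sub_distrib]
  rw [hsplit, hswap, hrhs, ← Finset.sum_sub_distrib]
  refine Finset.sum_congr rfl fun i _ => ?_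
  rw [← Finset.sum_sub_distrib]
  refine Finset.sum_congr rfl fun j _ => ?_
  unfold Abar Bbar Cbar
  ring


end AuxiliaryLemmas

/-- invariance of the bivector `P̃ = −(k/2)H·P + P̄′` under the phase flow
of `X`: `X({f,g}~) = {Xf,g}~ + {f,Xg}~` for all smooth `f, g`. -/
theorem bracketTilde_invariant (n : ℕ) (m : Fin n → ℝ) (hm : ∀ i, 0 < m i)
    (a : Fin n → ℝ) (k : ℝ)
    (U : (Fin n → ℝ) → ℝ) (hU : ContDiff ℝ (⊤ : ℕ∞) U)
    (hEuler : ∀ q : Fin n → ℝ, ∑ i, a i * dV U i q = k * U q)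
    (f g : Phase n → ℝ) (hf : ContDiff ℝ (⊤ : ℕ∞) f) (hg : ContDiff ℝ (⊤ : ℕ∞) g) :
    ∀ x : Phase n,
      Xop m U (bracketTilde m a k U f g) x
        = bracketTilde m a k U (fun y => Xop m U f y) g x
          + bracketTilde m a k U f (fun y => Xop m U g y) x := by

  intro x
  have hBfun : ∀ (F G : Phase n → ℝ), (fun y => bracketB m a k U F G y)
      = fun y => Xop m U F y * Yop a k G y - Yop a k F y * Xop m U G y :=
    fun F G => funext fun y => bracketB_eq m a k U F G y
  have cXf := contDiff_Xop m U hU f hf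
  have cXg := contDiff_Xop m U hU g hg
  have cYf := contDiff_Yop a k f hf
  have cYg := contDiff_Yop a k g hg
  have cHC : ContDiff ℝ (⊤ : ℕ∞) (fun y => -(k / 2) * Ham m U y * bracketC f g y) :=
    ((contDiff_const.mul (contDiff_Ham m U hU)).mul (contDiff_bracketC f g hf hg))
  have cB : ContDiff ℝ (⊤ : ℕ∞) (fun y => bracketB m a k U f g y) := by
    rw [hBfun f g]
    exact (cXf.mul cYg).sub (cYf.mul cXg)
  have step1 : Xop m U (bracketTilde m a k U f g) x
      = Xop m U (fun y => -(k / 2) * Ham m U y * bracketC f g y) x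
        + Xop m U (fun y => bracketB m a k U f g y) x := by
    unfold bracketTilde
    exact Xop_add m U _ _ x (diffAt cHC x) (diffAt cB x)
  have step2 : Xop m U (fun y => -(k / 2) * Ham m U y * bracketC f g y) x
      = -(k / 2) * Ham m U x
          * (bracketC (fun y => Xop m U f y) g x + bracketC f (fun y => Xop m U g y) x) := by
    rw [Xop_mul m U (fun y => -(k / 2) * Ham m U y) (fun y => bracketC f g y) x
        (diffAt (contDiff_const.mul (contDiff_Ham m U hU)) x)
        (diffAt (contDiff_bracketC f g hf hg) x),
      Xop_const_mul m U (-(k / 2)) (Ham m U) x (diffAt (contDiff_Ham m U hU) x),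
      Xop_Ham m U hU x, Xop_bracketC m U hU f g hf hg x]
    ring
  have step3 : Xop m U (fun y => bracketB m a k U f g y) x
      = (Xop m U (fun y => Xop m U f y) x * Yop a k g x
          + Xop m U f x * (Yop a k (fun y => Xop m U g y) x - k / 2 * Xop m U g x))
        - (Xop m U (fun y => Yop a k f y) x * Xop m U g x
          + Yop a k f x * Xop m U (fun y => Xop m U g y) x) := by
    rw [hBfun f g]
    rw [Xop_sub m U _ _ x ((diffAt cXf x).fun_mul (diffAt cYg x))
        ((diffAt cYf x).fun_mul (diffAt cXg x)),
      Xop_mul m U _ _ x (diffAt cXf x) (diffAt cYg x),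
      Xop_mul m U _ _ x (diffAt cYf x) (diffAt cXg x),
      Xop_Yop_comm m U hU a k hEuler g hg x]
  have step3' : Xop m U (fun y => Yop a k f y) x
      = Yop a k (fun y => Xop m U f y) x - k / 2 * Xop m U f x :=
    Xop_Yop_comm m U hU a k hEuler f hf x
  rw [step1, step2, step3, step3']
  unfold bracketTilde
  rw [bracketB_eq m a k U (fun y => Xop m U f y) g x,
    bracketB_eq m a k U f (fun y => Xop m U g y) x]
  ring
end
end

section
/- Assume k ≠ 0. Then at every point x = (q,p) ∈ ℝⁿ×ℝⁿ with H(x) ≠ 0, the 2n×2n matrix −(k/2)·H(x)·J + Π̄(x) is invertible; that is, the invariant bivector P̃ = −(k/2)H·P + P̄′ is non-degenerate wherever H does not vanish. -/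
open scoped BigOperators

noncomputable section

/-- The `2n×2n` antisymmetric matrix `Π̄(x)` of the bivector `P̄′`, with blocks
`Π̄_qq = Ā`, `Π̄_qp = B̄`, `Π̄_pq = −B̄ᵀ`, `Π̄_pp = C̄`. -/
def PiBarMat {n : ℕ} (m a : Fin n → ℝ) (k : ℝ) (U : (Fin n → ℝ) → ℝ) (x : Phase n) :
    Matrix (Fin n ⊕ Fin n) (Fin n ⊕ Fin n) ℝ :=
  Matrix.fromBlocks
    (Matrix.of fun i j => Abar m a i j x)
    (Matrix.of fun i j => Bbar m a k U i j x)
    (Matrix.of fun i j => - Bbar m a k U j i x)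
    (Matrix.of fun i j => Cbar k U i j x)

/-- The matrix `J = [[0, Iₙ], [−Iₙ, 0]]` of the canonical Poisson bivector. -/
def Jmat (n : ℕ) : Matrix (Fin n ⊕ Fin n) (Fin n ⊕ Fin n) ℝ :=
  Matrix.fromBlocks 0 1 (-1) 0

/-- for `k ≠ 0`, at every point with `H(x) ≠ 0` the matrix
`−(k/2)·H(x)·J + Π̄(x)` of the bivector `P̃ = −(k/2)H·P + P̄′` is invertible. -/
theorem tilde_bivector_nondegenerate (n : ℕ) (m : Fin n → ℝ) (hm : ∀ i, 0 < m i)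
    (a : Fin n → ℝ) (k : ℝ) (hk : k ≠ 0)
    (U : (Fin n → ℝ) → ℝ) (hU : ContDiff ℝ (⊤ : ℕ∞) U)
    (hEuler : ∀ q : Fin n → ℝ, ∑ i, a i * dV U i q = k * U q) :
    ∀ x : Phase n, Ham m U x ≠ 0 →
      IsUnit ((-(k / 2) * Ham m U x) • Jmat n + PiBarMat m a k U x) := by
  intro x hH
  rw [Matrix.isUnit_iff_isUnit_det, isUnit_iff_ne_zero]
  intro hdet
  obtain ⟨v, hv0, hMv⟩ := Matrix.exists_mulVec_eq_zero_iff.mpr hdet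
  have hkH : k / 2 * Ham m U x ≠ 0 := mul_ne_zero (div_ne_zero hk two_ne_zero) hH
  -- extract row equations
  have row1 : ∀ i : Fin n,
      -(k / 2 * Ham m U x * v (Sum.inr i)) +
        ((∑ j, Abar m a i j x * v (Sum.inl j)) + ∑ j, Bbar m a k U i j x * v (Sum.inr j)) = 0 := by
    intro i
    have r := congrFun hMv (Sum.inl i)
    simpa only [Matrix.mulVec, dotProduct, Fintype.sum_sum_type, Matrix.add_apply,
      Matrix.smul_apply, PiBarMat, Jmat, Matrix.fromBlocks_apply₁₁, Matrix.fromBlocks_apply₁₂,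
      Matrix.fromBlocks_apply₂₁, Matrix.fromBlocks_apply₂₂, Matrix.zero_apply, Matrix.one_apply,
      Matrix.neg_apply, smul_eq_mul, mul_zero, zero_add, add_zero, mul_ite, mul_one,
      Pi.zero_apply, Matrix.of_apply, add_mul, ite_mul, zero_mul, Finset.sum_add_distrib,
      Finset.sum_ite_eq, Finset.mem_univ, if_true, mul_neg, neg_mul, neg_neg, neg_zero,
      Finset.sum_neg_distrib, Finset.sum_const_zero] using r
  have row2 : ∀ i : Fin n,
      k / 2 * Ham m U x * v (Sum.inl i) +
        (-∑ j, Bbar m a k U j i x * v (Sum.inl j) + ∑ j, Cbar k U i j x * v (Sum.inr j)) = 0 := by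
    intro i
    have r := congrFun hMv (Sum.inr i)
    simpa only [Matrix.mulVec, dotProduct, Fintype.sum_sum_type, Matrix.add_apply,
      Matrix.smul_apply, PiBarMat, Jmat, Matrix.fromBlocks_apply₁₁, Matrix.fromBlocks_apply₁₂,
      Matrix.fromBlocks_apply₂₁, Matrix.fromBlocks_apply₂₂, Matrix.zero_apply, Matrix.one_apply,
      Matrix.neg_apply, smul_eq_mul, mul_zero, zero_add, add_zero, mul_ite, mul_one,
      Pi.zero_apply, Matrix.of_apply, add_mul, ite_mul, zero_mul, Finset.sum_add_distrib,
      Finset.sum_ite_eq, Finset.mem_univ, if_true, mul_neg, neg_mul, neg_neg, neg_zero,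
      Finset.sum_neg_distrib, Finset.sum_const_zero] using r
  -- scalar invariants
  obtain ⟨S, hSdef⟩ : ∃ s, s = ∑ j, a j * v (Sum.inl j) := ⟨_, rfl⟩
  obtain ⟨T, hTdef⟩ : ∃ s, s = ∑ j, x.2 j / m j * v (Sum.inl j) := ⟨_, rfl⟩
  obtain ⟨R, hRdef⟩ : ∃ s, s = ∑ j, x.2 j * v (Sum.inr j) := ⟨_, rfl⟩
  obtain ⟨E, hEdef⟩ : ∃ s, s = ∑ j, dV U j x.1 * v (Sum.inr j) := ⟨_, rfl⟩
  obtain ⟨c, hcdef⟩ : ∃ s, s = ∑ i, a i * x.2 i := ⟨_, rfl⟩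
  obtain ⟨d, hddef⟩ : ∃ s, s = ∑ i, x.2 i / m i * dV U i x.1 := ⟨_, rfl⟩
  -- block sums
  have sA : ∀ i, ∑ j, Abar m a i j x * v (Sum.inl j) = x.2 i / m i * S - a i * T := by
    intro i
    rw [hSdef, hTdef, Finset.mul_sum, Finset.mul_sum, ← Finset.sum_sub_distrib]
    exact Finset.sum_congr rfl fun j _ => by unfold Abar; ring
  have sB : ∀ i, ∑ j, Bbar m a k U i j x * v (Sum.inr j)
      = k / 2 * (x.2 i / m i) * R + a i * E := by
    intro i
    rw [hRdef, hEdef, Finset.mul_sum, Finset.mul_sum, ← Finset.sum_add_distrib]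
    exact Finset.sum_congr rfl fun j _ => by unfold Bbar; ring
  have sB' : ∀ i, ∑ j, Bbar m a k U j i x * v (Sum.inl j)
      = k / 2 * x.2 i * T + dV U i x.1 * S := by
    intro i
    rw [hSdef, hTdef, Finset.mul_sum, Finset.mul_sum, ← Finset.sum_add_distrib]
    exact Finset.sum_congr rfl fun j _ => by unfold Bbar; ring
  have sC : ∀ i, ∑ j, Cbar k U i j x * v (Sum.inr j)
      = k / 2 * x.2 i * E - k / 2 * dV U i x.1 * R := by
    intro i
    rw [hRdef, hEdef, Finset.mul_sum, Finset.mul_sum, ← Finset.sum_sub_distrib]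
    exact Finset.sum_congr rfl fun j _ => by unfold Cbar; ring
  -- pointwise formulas for the kernel vector
  have key1 : ∀ i, k / 2 * Ham m U x * v (Sum.inr i)
      = x.2 i / m i * (S + k / 2 * R) + a i * (E - T) := by
    intro i
    have r := row1 i
    rw [sA i, sB i] at r
    linear_combination -r
  have key2 : ∀ i, k / 2 * Ham m U x * v (Sum.inl i)
      = k / 2 * x.2 i * (T - E) + dV U i x.1 * (S + k / 2 * R) := by
    intro i
    have r := row2 i
    rw [sB' i, sC i] at r
    linear_combination r
  -- kinetic energy sums
  have hK1 : ∑ i, x.2 i * (x.2 i / m i) = 2 * (Ham m U x - U x.1) := by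
    rw [Finset.sum_congr rfl (fun i _ =>
      show x.2 i * (x.2 i / m i) = 2 * (x.2 i ^ 2 / (2 * m i)) from by ring),
      ← Finset.mul_sum]
    unfold Ham; ring
  have hK2 : ∑ i, x.2 i / m i * x.2 i = 2 * (Ham m U x - U x.1) := by
    rw [Finset.sum_congr rfl (fun i _ =>
      show x.2 i / m i * x.2 i = 2 * (x.2 i ^ 2 / (2 * m i)) from by ring),
      ← Finset.mul_sum]
    unfold Ham; ring
  -- weighted sums of the kernel equations
  have w1 : ∀ g : Fin n → ℝ, k / 2 * Ham m U x * (∑ i, g i * v (Sum.inr i))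
      = (S + k / 2 * R) * (∑ i, g i * (x.2 i / m i)) + (E - T) * (∑ i, g i * a i) := by
    intro g
    rw [Finset.mul_sum, Finset.mul_sum, Finset.mul_sum, ← Finset.sum_add_distrib]
    refine Finset.sum_congr rfl fun i _ => ?_
    rw [show k / 2 * Ham m U x * (g i * v (Sum.inr i))
        = g i * (k / 2 * Ham m U x * v (Sum.inr i)) from by ring, key1 i]
    ring
  have w2 : ∀ g : Fin n → ℝ, k / 2 * Ham m U x * (∑ i, g i * v (Sum.inl i))
      = k / 2 * (T - E) * (∑ i, g i * x.2 i) + (S + k / 2 * R) * (∑ i, g i * dV U i x.1) := by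
    intro g
    rw [Finset.mul_sum, Finset.mul_sum, Finset.mul_sum, ← Finset.sum_add_distrib]
    refine Finset.sum_congr rfl fun i _ => ?_
    rw [show k / 2 * Ham m U x * (g i * v (Sum.inl i))
        = g i * (k / 2 * Ham m U x * v (Sum.inl i)) from by ring, key2 i]
    ring
  -- the four scalar relations
  have hS : k / 2 * Ham m U x * S = k / 2 * (T - E) * c + (S + k / 2 * R) * (k * U x.1) := by
    have h := w2 a
    rw [hEuler x.1, ← hcdef, ← hSdef] at h
    exact h
  have hT : k / 2 * Ham m U x * T
      = k / 2 * (T - E) * (2 * (Ham m U x - U x.1)) + (S + k / 2 * R) * d := by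
    have h := w2 fun i => x.2 i / m i
    rw [hK2, ← hddef, ← hTdef] at h
    exact h
  have hR : k / 2 * Ham m U x * R
      = (S + k / 2 * R) * (2 * (Ham m U x - U x.1)) + (E - T) * c := by
    have h := w1 x.2
    rw [hK1, ← hRdef,
      show ∑ i, x.2 i * a i = c from by
        rw [hcdef]; exact Finset.sum_congr rfl fun i _ => mul_comm _ _] at h
    exact h
  have hE : k / 2 * Ham m U x * E = (S + k / 2 * R) * d + (E - T) * (k * U x.1) := by
    have h := w1 fun i => dV U i x.1
    rw [← hEdef,
      show ∑ i, dV U i x.1 * (x.2 i / m i) = d from by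
        rw [hddef]; exact Finset.sum_congr rfl fun i _ => mul_comm _ _,
      show ∑ i, dV U i x.1 * a i = k * U x.1 from by
        rw [← hEuler x.1]; exact Finset.sum_congr rfl fun i _ => mul_comm _ _] at h
    exact h
  -- conclude the invariants vanish
  have hA : S + k / 2 * R = 0 := by
    have h0 : (k / 2 * Ham m U x) * (S + k / 2 * R) = 0 := by
      linear_combination -hS - (k / 2) * hR
    exact (mul_eq_zero.mp h0).resolve_left hkH
  have hB : E - T = 0 := by
    have h0 : (k / 2 * Ham m U x) * (E - T) = 0 := by
      linear_combination -hE + hT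
    exact (mul_eq_zero.mp h0).resolve_left hkH
  -- hence v = 0, contradiction
  refine hv0 (funext fun z => ?_)
  cases z with
  | inl i =>
      have h' : k / 2 * Ham m U x * v (Sum.inl i) = 0 := by
        linear_combination key2 i + dV U i x.1 * hA + (-(k / 2) * x.2 i) * hB
      show v (Sum.inl i) = 0
      exact (mul_eq_zero.mp h').resolve_left hkH
  | inr i =>
      have h' : k / 2 * Ham m U x * v (Sum.inr i) = 0 := by
        linear_combination key1 i + (x.2 i / m i) * hA + a i * hB
      show v (Sum.inr i) = 0
      exact (mul_eq_zero.mp h').resolve_left hkH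
end
end

section
/- For every smooth function f : ℝⁿ×ℝⁿ → ℝ one has {f, H}~ = (k/2)·H·{f, H} at every point of ℝⁿ×ℝⁿ, where {f,g}~ = −(k/2)·H·{f,g} + {f,g}⁻; this is the tensor analogue of the Lagrange-type identity for inhomogeneous potentials: P̃ dH = (k/2)·H·P dH. -/
open scoped BigOperators

noncomputable section

private lemma dsum_aux {n : ℕ} (c : ℝ) (A B : Fin n → ℝ) :
    ∑ i, ∑ j, c * (A i * B j) = c * ((∑ i, A i) * (∑ j, B j)) := by
  calc ∑ i, ∑ j, c * (A i * B j) = ∑ i, (c * A i) * ∑ j, B j := by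
        refine Finset.sum_congr rfl fun i _ => ?_
        rw [Finset.mul_sum]
        exact Finset.sum_congr rfl fun j _ => by ring
    _ = (∑ i, c * A i) * ∑ j, B j := (Finset.sum_mul _ _ _).symm
    _ = (c * ∑ i, A i) * ∑ j, B j := by rw [← Finset.mul_sum]
    _ = c * ((∑ i, A i) * (∑ j, B j)) := by rw [mul_assoc]

private lemma hasFDerivAt_Ham_aux {n : ℕ} (m : Fin n → ℝ) (hm : ∀ i, 0 < m i) (x : Phase n)
    (U : (Fin n → ℝ) → ℝ) (hU : ContDiff ℝ (⊤ : ℕ∞) U) :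
    HasFDerivAt (Ham m U)
      ((∑ i, (x.2 i / m i) • ((ContinuousLinearMap.proj i).comp
          (ContinuousLinearMap.snd ℝ (Fin n → ℝ) (Fin n → ℝ))))
        + (fderiv ℝ U x.1).comp (ContinuousLinearMap.fst ℝ (Fin n → ℝ) (Fin n → ℝ))) x := by
  have h1 : ∀ i : Fin n, HasFDerivAt (fun y : Phase n => y.2 i ^ 2 / (2 * m i))
      ((x.2 i / m i) • ((ContinuousLinearMap.proj i).comp
        (ContinuousLinearMap.snd ℝ (Fin n → ℝ) (Fin n → ℝ)))) x := by
    intro i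
    set L := (ContinuousLinearMap.proj i).comp
        (ContinuousLinearMap.snd ℝ (Fin n → ℝ) (Fin n → ℝ)) with hL
    have h0 : HasFDerivAt (fun y : Phase n => y.2 i) L x := L.hasFDerivAt
    have h := (h0.mul h0).const_mul ((2 * m i)⁻¹)
    have heq : (fun y : Phase n => y.2 i ^ 2 / (2 * m i))
        = fun y : Phase n => (2 * m i)⁻¹ * (y.2 i * y.2 i) := by ext y; ring
    rw [heq]
    have hLe : (x.2 i / m i) • L = (2 * m i)⁻¹ • (x.2 i • L + x.2 i • L) := by
      rw [smul_add, smul_smul, ← add_smul]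
      congr 1
      have := (hm i).ne'
      field_simp
      ring
    rw [hLe]
    exact h
  have hsum := HasFDerivAt.fun_sum (fun i (_ : i ∈ Finset.univ) => h1 i)
  have hUx : HasFDerivAt (fun y : Phase n => U y.1)
      ((fderiv ℝ U x.1).comp (ContinuousLinearMap.fst ℝ (Fin n → ℝ) (Fin n → ℝ))) x :=
    ((hU.differentiable (by simp) x.1).hasFDerivAt).comp x (hasFDerivAt_fst)
  exact hsum.add hUx

private lemma dq_Ham_aux {n : ℕ} (m : Fin n → ℝ) (hm : ∀ i, 0 < m i) (x : Phase n)
    (U : (Fin n → ℝ) → ℝ) (hU : ContDiff ℝ (⊤ : ℕ∞) U) (i : Fin n) :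
    dq (Ham m U) i x = dV U i x.1 := by
  rw [dq, (hasFDerivAt_Ham_aux m hm x U hU).fderiv]
  simp [dV, ContinuousLinearMap.sum_apply]

private lemma dp_Ham_aux {n : ℕ} (m : Fin n → ℝ) (hm : ∀ i, 0 < m i) (x : Phase n)
    (U : (Fin n → ℝ) → ℝ) (hU : ContDiff ℝ (⊤ : ℕ∞) U) (i : Fin n) :
    dp (Ham m U) i x = x.2 i / m i := by
  rw [dp, (hasFDerivAt_Ham_aux m hm x U hU).fderiv]
  simp [ContinuousLinearMap.sum_apply, Pi.single_apply]

/-- the tensor analogue of the Lagrange-type identity for inhomogeneous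
potentials: `{f,H}~ = (k/2)·H·{f,H}` for every smooth `f`, i.e. `P̃ dH = (k/2)·H·P dH`. -/
theorem bracketTilde_apply_H (n : ℕ) (m : Fin n → ℝ) (hm : ∀ i, 0 < m i)
    (a : Fin n → ℝ) (k : ℝ)
    (U : (Fin n → ℝ) → ℝ) (hU : ContDiff ℝ (⊤ : ℕ∞) U)
    (hEuler : ∀ q : Fin n → ℝ, ∑ i, a i * dV U i q = k * U q)
    (f : Phase n → ℝ) (hf : ContDiff ℝ (⊤ : ℕ∞) f) :
    ∀ x : Phase n,
      bracketTilde m a k U f (Ham m U) x = k / 2 * Ham m U x * bracketC f (Ham m U) x := by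
  intro x
  have hdq : ∀ i, dq (Ham m U) i x = dV U i x.1 := dq_Ham_aux m hm x U hU
  have hdp : ∀ i, dp (Ham m U) i x = x.2 i / m i := dp_Ham_aux m hm x U hU
  have hB : bracketB m a k U f (Ham m U) x = k * Ham m U x * bracketC f (Ham m U) x := by
    simp only [bracketB, bracketC, Abar, Bbar, Cbar, hdq, hdp]
    have step1 : ∀ i j : Fin n,
        (a j * x.2 i / m i - a i * x.2 j / m j) * (dq f i x * dV U j x.1)
          + (k / (2 * m i) * (x.2 i * x.2 j) + a i * dV U j x.1)
              * (dq f i x * (x.2 j / m j) - dp f j x * dV U i x.1)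
          + k / 2 * (x.2 i * dV U j x.1 - x.2 j * dV U i x.1) * (dp f i x * (x.2 j / m j))
        = 1 * ((dq f i x * (x.2 i / m i)) * (a j * dV U j x.1))
          + (k / 2) * ((dq f i x * (x.2 i / m i)) * (x.2 j * (x.2 j / m j)))
          + (-(k / 2)) * ((dV U i x.1 * (x.2 i / m i)) * (x.2 j * dp f j x))
          + (-1 : ℝ) * ((a i * dV U i x.1) * (dp f j x * dV U j x.1))
          + (k / 2) * ((x.2 i * dp f i x) * (dV U j x.1 * (x.2 j / m j)))
          + (-(k / 2)) * ((dp f i x * dV U i x.1) * (x.2 j * (x.2 j / m j))) := by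
      intro i j
      have hi := (hm i).ne'
      have hj := (hm j).ne'
      field_simp
      ring
    calc
      ∑ i, ∑ j,
          ((a j * x.2 i / m i - a i * x.2 j / m j) * (dq f i x * dV U j x.1)
            + (k / (2 * m i) * (x.2 i * x.2 j) + a i * dV U j x.1)
                * (dq f i x * (x.2 j / m j) - dp f j x * dV U i x.1)
            + k / 2 * (x.2 i * dV U j x.1 - x.2 j * dV U i x.1) * (dp f i x * (x.2 j / m j)))
        = ∑ i, ∑ j,
          (1 * ((dq f i x * (x.2 i / m i)) * (a j * dV U j x.1))
            + (k / 2) * ((dq f i x * (x.2 i / m i)) * (x.2 j * (x.2 j / m j)))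
            + (-(k / 2)) * ((dV U i x.1 * (x.2 i / m i)) * (x.2 j * dp f j x))
            + (-1 : ℝ) * ((a i * dV U i x.1) * (dp f j x * dV U j x.1))
            + (k / 2) * ((x.2 i * dp f i x) * (dV U j x.1 * (x.2 j / m j)))
            + (-(k / 2)) * ((dp f i x * dV U i x.1) * (x.2 j * (x.2 j / m j)))) :=
        Finset.sum_congr rfl fun i _ => Finset.sum_congr rfl fun j _ => step1 i j
      _ = 1 * ((∑ i, dq f i x * (x.2 i / m i)) * (∑ j, a j * dV U j x.1))
          + (k / 2) * ((∑ i, dq f i x * (x.2 i / m i)) * (∑ j, x.2 j * (x.2 j / m j)))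
          + (-(k / 2)) * ((∑ i, dV U i x.1 * (x.2 i / m i)) * (∑ j, x.2 j * dp f j x))
          + (-1 : ℝ) * ((∑ i, a i * dV U i x.1) * (∑ j, dp f j x * dV U j x.1))
          + (k / 2) * ((∑ i, x.2 i * dp f i x) * (∑ j, dV U j x.1 * (x.2 j / m j)))
          + (-(k / 2)) * ((∑ i, dp f i x * dV U i x.1) * (∑ j, x.2 j * (x.2 j / m j))) := by
        simp only [Finset.sum_add_distrib, dsum_aux]
      _ = k * Ham m U x * ∑ i, (dq f i x * (x.2 i / m i) - dp f i x * dV U i x.1) := by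
        have hS2 : (∑ i, a i * dV U i x.1) = k * U x.1 := hEuler x.1
        have hS3 : (∑ j, x.2 j * (x.2 j / m j)) = 2 * ∑ j, x.2 j ^ 2 / (2 * m j) := by
          rw [Finset.mul_sum]
          refine Finset.sum_congr rfl fun j _ => ?_
          have := (hm j).ne'
          field_simp
        have hS7 : (∑ j, x.2 j * dp f j x) = ∑ i, x.2 i * dp f i x := rfl
        have hS8 : (∑ j, dp f j x * dV U j x.1) = ∑ i, dp f i x * dV U i x.1 := rfl
        rw [hS2, hS3, hS7, hS8, Finset.sum_sub_distrib, Ham]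
        ring
  simp only [bracketTilde, hB]
  ring
end
end
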